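/- arXiv:1207.3453 — 9 statements merged into one kernel-verified Lean document; each statement's English description precedes it below -/
import Mathlib

section
/- Let M be an n×m real matrix, partitioned as M = [K | N] where K consists of the first k columns and N of the remaining m−k columns. Then the set I_k of vectors a ∈ ℝ^k such that the extended vector (a,0) ∈ ℝ^m lies in the row span of M is a linear subspace of ℝ^k of dimension rank(M) − rank(N). -/
open Matrix

def extByZero (k l : ℕ) : (Fin k → ℝ) →ₗ[ℝ] (Fin k ⊕ Fin l → ℝ) where
  toFun a := Sum.elim a 0
  map_add' a b := by funext x; cases x <;> simp
  map_smul' c a := by funext x; cases x <;> simp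

/-!
The row span `R` of `M = [K | N]` projects onto the row span of `N` under `v ↦ v ∘ Sum.inr`,
and the kernel of that projection restricted to `R` is `R ∩ (ℝ^k × 0)`, which is the image of
`I_k` under `a ↦ (a, 0)`. Rank–nullity for the restricted projection gives
`dim I_k + rank N = rank M`.
-/

open Module LinearMap

namespace Submodule

variable {K E F G : Type*} [DivisionRing K] [AddCommGroup E] [Module K E]
  [AddCommGroup F] [Module K F] [AddCommGroup G] [Module K G]

theorem finrank_map_add_finrank_inf_ker (R : Submodule K E) [FiniteDimensional K R]
    (π : E →ₗ[K] F) : finrank K (R.map π) + finrank K ↥(R ⊓ ker π) = finrank K R := by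
  have h := (π.domRestrict R).finrank_range_add_finrank_ker
  rwa [range_domRestrict, ker_domRestrict, ← finrank_map_subtype_eq, map_comap_subtype] at h

theorem finrank_comap_of_injective (R : Submodule K E) {i : G →ₗ[K] E}
    (hi : Function.Injective i) : finrank K (R.comap i) = finrank K ↥(R ⊓ range i) := by
  rw [(equivMapOfInjective i hi _).finrank_eq, map_comap_eq, inf_comm]

theorem finrank_comap_add_finrank_map (R : Submodule K E) [FiniteDimensional K R]
    {i : G →ₗ[K] E} {π : E →ₗ[K] F} (hi : Function.Injective i) (hexact : range i = ker π) :
    finrank K (R.comap i) + finrank K (R.map π) = finrank K R := by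
  rw [finrank_comap_of_injective R hi, hexact, add_comm, finrank_map_add_finrank_inf_ker]

end Submodule

theorem Matrix.map_funLeft_span_row {m n p R : Type*} [CommSemiring R] (A : Matrix m n R)
    (f : p → n) :
    (Submodule.span R (Set.range A.row)).map (funLeft R R f) =
      Submodule.span R (Set.range (A.submatrix _root_.id f).row) := by
  rw [Submodule.map_span, ← Set.range_comp]
  rfl

theorem extByZero_injective (k l : ℕ) : Function.Injective (extByZero k l) :=
  fun _ _ hab => funext fun x => congrFun hab (Sum.inl x)

theorem range_extByZero (k l : ℕ) :
    range (extByZero k l) = ker (funLeft ℝ ℝ (Sum.inr : Fin l → Fin k ⊕ Fin l)) := by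
  ext v
  constructor
  · rintro ⟨a, rfl⟩
    rfl
  · intro hv
    refine ⟨v ∘ Sum.inl, funext fun x => ?_⟩
    cases x with
    | inl i => rfl
    | inr j => exact (congrFun (mem_ker.mp hv) j).symm

/-- For `M = [K | N]` an `n × m` real matrix (columns indexed by
`Fin k ⊕ Fin l`, so `m = k + l`, with `N` the last `l` columns), the set of
`a ∈ ℝ^k` with `(a,0)` in the row span of `M` is a subspace of dimension
`rank M − rank N`. -/
theorem stmt0 (n k l : ℕ) (M : Matrix (Fin n) (Fin k ⊕ Fin l) ℝ) :
    ∃ S : Submodule ℝ (Fin k → ℝ),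
      (∀ a : Fin k → ℝ,
        a ∈ S ↔ Sum.elim a (0 : Fin l → ℝ) ∈
          Submodule.span ℝ (Set.range (fun i : Fin n => M i))) ∧
      Module.finrank ℝ S =
        M.rank - (Matrix.of fun (i : Fin n) (j : Fin l) => M i (Sum.inr j)).rank := by
  set R := Submodule.span ℝ (Set.range M.row)
  refine ⟨R.comap (extByZero k l), fun a => Iff.rfl, ?_⟩
  have h := R.finrank_comap_add_finrank_map (extByZero_injective k l) (range_extByZero k l)
  rw [M.map_funLeft_span_row] at h
  rw [M.rank_eq_finrank_span_row, rank_eq_finrank_span_row]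
  exact Nat.eq_sub_of_add_eq h
end

section
/- Let M = Y·L with ker(L) ⊆ ker(M) and dim ker(M) = dim ker(L) + 1. Suppose indices 1,…,k are such that every ρ ∈ ker(L) has ρ_i = 0 for 1 ≤ i ≤ k, and let χ ∈ ker(M) \ ker(L). If ψ ∈ ker(M) has all coordinates nonzero, then χ_i ≠ 0 for 1 ≤ i ≤ k, and ψ_i = (χ_i/χ₁)·ψ₁ for 2 ≤ i ≤ k. -/
open Matrix

/-- with `M = Y·L`, `ker L ⊆ ker M`, dynamic deficiency 1, coordinates
indexed by `Fin k ⊕ Fin l` such that every `ρ ∈ ker L` vanishes on the first `k`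
coordinates, `χ ∈ ker M \ ker L`, and `ψ ∈ ker M` with all coordinates nonzero:
then `χ_i ≠ 0` for the first `k` coordinates and `ψ_i = (χ_i/χ₁)·ψ₁` there. -/
theorem stmt8 (n k l : ℕ) (hk : 0 < k)
    (L : Matrix (Fin k ⊕ Fin l) (Fin k ⊕ Fin l) ℝ)
    (Y : Matrix (Fin n) (Fin k ⊕ Fin l) ℝ)
    (M : Matrix (Fin n) (Fin k ⊕ Fin l) ℝ) (hM : M = Y * L)
    (hsub : LinearMap.ker L.mulVecLin ≤ LinearMap.ker M.mulVecLin)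
    (hdim : Module.finrank ℝ ↥(LinearMap.ker M.mulVecLin) =
      Module.finrank ℝ ↥(LinearMap.ker L.mulVecLin) + 1)
    (hzero : ∀ ρ ∈ LinearMap.ker L.mulVecLin, ∀ i : Fin k, ρ (Sum.inl i) = 0)
    (χ : Fin k ⊕ Fin l → ℝ) (hχM : χ ∈ LinearMap.ker M.mulVecLin)
    (hχL : χ ∉ LinearMap.ker L.mulVecLin)
    (ψ : Fin k ⊕ Fin l → ℝ) (hψM : ψ ∈ LinearMap.ker M.mulVecLin)
    (hψne : ∀ j, ψ j ≠ 0) :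
    (∀ i : Fin k, χ (Sum.inl i) ≠ 0) ∧
    (∀ i : Fin k, ψ (Sum.inl i) =
      (χ (Sum.inl i) / χ (Sum.inl ⟨0, hk⟩)) * ψ (Sum.inl ⟨0, hk⟩)) := by
  set KL := LinearMap.ker L.mulVecLin
  set KM := LinearMap.ker M.mulVecLin
  set S : Submodule ℝ (Fin k ⊕ Fin l → ℝ) := KL ⊔ Submodule.span ℝ {χ}
  have hSle : S ≤ KM := sup_le hsub
    ((Submodule.span_singleton_le_iff_mem _ _).mpr hχM)
  have hlt : KL < S := lt_of_le_of_ne le_sup_left (by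
    intro h
    exact hχL (h ▸ Submodule.mem_sup_right (Submodule.mem_span_singleton_self χ)))
  have hrank : Module.finrank ℝ KM ≤ Module.finrank ℝ S := by
    have h1 : Module.finrank ℝ KL < Module.finrank ℝ S :=
      Submodule.finrank_lt_finrank_of_lt hlt
    omega
  have hSeq : S = KM := Submodule.eq_of_le_of_finrank_le hSle hrank
  -- decompose ψ
  have hψS : ψ ∈ S := hSeq ▸ hψM
  rw [Submodule.mem_sup] at hψS
  obtain ⟨ρ, hρ, z, hz, hψeq⟩ := hψS
  rw [Submodule.mem_span_singleton] at hz
  obtain ⟨c, rfl⟩ := hz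
  have key : ∀ i : Fin k, ψ (Sum.inl i) = c * χ (Sum.inl i) := by
    intro i
    have := congrFun hψeq (Sum.inl i)
    simp only [Pi.add_apply, Pi.smul_apply, smul_eq_mul, hzero ρ hρ i] at this
    linarith [this]
  have hc : c ≠ 0 := by
    intro hc0
    have := key ⟨0, hk⟩
    rw [hc0, zero_mul] at this
    exact hψne _ this
  have hχne : ∀ i : Fin k, χ (Sum.inl i) ≠ 0 := by
    intro i h0
    have := key i
    rw [h0, mul_zero] at this
    exact hψne _ this
  refine ⟨hχne, fun i => ?_⟩
  rw [key i, key ⟨0, hk⟩]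
  field_simp [hχne ⟨0, hk⟩]
end

section
/- (Shinar–Feinberg-type ACR, linear-algebraic core) Let M = Y·L with ker(L) ⊆ ker(M) and dim ker(M) ≤ dim ker(L) + 1. Suppose every vector in ker(L) has zero first and second coordinates, and there exists ψ ∈ ker(M) with all coordinates strictly positive. Then dim ker(M) = dim ker(L) + 1, and for any χ ∈ ker(M) \ ker(L), the ratio ψ₂/ψ₁ equals χ₂/χ₁; in particular ψ₂/ψ₁ is the same for all such everywhere-positive ψ ∈ ker(M). -/
open Matrix

/-- Shinar–Feinberg-type ACR, linear-algebraic core: `M = Y·L`,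
`ker L ⊆ ker M`, `dim ker M ≤ dim ker L + 1`, every vector of `ker L` has zero
first and second coordinates, and there is `ψ ∈ ker M` with all coordinates
positive. Then `dim ker M = dim ker L + 1` and for every `χ ∈ ker M \ ker L`,
`ψ₂/ψ₁ = χ₂/χ₁`; in particular `ψ₂/ψ₁` is independent of the positive `ψ`. -/
theorem stmt9 (n m : ℕ) (hm : 2 ≤ m)
    (L : Matrix (Fin m) (Fin m) ℝ) (Y : Matrix (Fin n) (Fin m) ℝ)
    (M : Matrix (Fin n) (Fin m) ℝ) (hM : M = Y * L)
    (hsub : LinearMap.ker L.mulVecLin ≤ LinearMap.ker M.mulVecLin)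
    (hdim : Module.finrank ℝ ↥(LinearMap.ker M.mulVecLin) ≤
      Module.finrank ℝ ↥(LinearMap.ker L.mulVecLin) + 1)
    (hzero : ∀ ρ ∈ LinearMap.ker L.mulVecLin,
      ρ ⟨0, by omega⟩ = 0 ∧ ρ ⟨1, by omega⟩ = 0)
    (ψ : Fin m → ℝ) (hψM : ψ ∈ LinearMap.ker M.mulVecLin)
    (hψpos : ∀ j, 0 < ψ j) :
    Module.finrank ℝ ↥(LinearMap.ker M.mulVecLin) =
      Module.finrank ℝ ↥(LinearMap.ker L.mulVecLin) + 1 ∧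
    (∀ χ ∈ LinearMap.ker M.mulVecLin, χ ∉ LinearMap.ker L.mulVecLin →
      ψ ⟨1, by omega⟩ / ψ ⟨0, by omega⟩ = χ ⟨1, by omega⟩ / χ ⟨0, by omega⟩) ∧
    (∀ ψ' : Fin m → ℝ, ψ' ∈ LinearMap.ker M.mulVecLin → (∀ j, 0 < ψ' j) →
      ψ' ⟨1, by omega⟩ / ψ' ⟨0, by omega⟩ = ψ ⟨1, by omega⟩ / ψ ⟨0, by omega⟩) := by
  have hψL : ψ ∉ LinearMap.ker L.mulVecLin := by
    intro h
    have := (hzero ψ h).1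
    exact absurd this (ne_of_gt (hψpos _))
  set KL := LinearMap.ker L.mulVecLin
  set KM := LinearMap.ker M.mulVecLin
  have hψne : ψ ≠ 0 := by
    intro h
    have := hψpos ⟨0, by omega⟩
    rw [h] at this; simp at this
  have hK : KL ⊔ Submodule.span ℝ {ψ} ≤ KM := by
    refine sup_le hsub ?_
    rw [Submodule.span_le, Set.singleton_subset_iff]
    exact hψM
  have hinf : KL ⊓ Submodule.span ℝ {ψ} = ⊥ := by
    rw [eq_bot_iff]
    intro x hx
    obtain ⟨hx1, hx2⟩ := Submodule.mem_inf.mp hx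
    obtain ⟨c, rfl⟩ := Submodule.mem_span_singleton.mp hx2
    rcases eq_or_ne c 0 with rfl | hc
    · simp
    · exact absurd (by simpa [smul_smul, inv_mul_cancel₀ hc] using KL.smul_mem c⁻¹ hx1) hψL
  have hrank : Module.finrank ℝ ↥(KL ⊔ Submodule.span ℝ {ψ}) =
      Module.finrank ℝ ↥KL + 1 := by
    have := Submodule.finrank_sup_add_finrank_inf_eq KL (Submodule.span ℝ {ψ})
    rw [hinf, finrank_bot, finrank_span_singleton hψne] at this
    omega
  have heq : KL ⊔ Submodule.span ℝ {ψ} = KM := by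
    apply Submodule.eq_of_le_of_finrank_le hK
    rw [hrank]; exact hdim
  have hrankM : Module.finrank ℝ ↥KM = Module.finrank ℝ ↥KL + 1 := by
    rw [← heq]; exact hrank
  have key : ∀ χ ∈ KM, χ ∉ KL →
      ψ ⟨1, by omega⟩ / ψ ⟨0, by omega⟩ = χ ⟨1, by omega⟩ / χ ⟨0, by omega⟩ := by
    intro χ hχM hχL
    rw [← heq] at hχM
    obtain ⟨ρ, hρ, s, hs, hsum⟩ := Submodule.mem_sup.mp hχM
    rw [Submodule.mem_span_singleton] at hs
    obtain ⟨c, rfl⟩ := hs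
    have hc : c ≠ 0 := by
      rintro rfl
      apply hχL
      rw [← hsum]; simpa using hρ
    obtain ⟨h0, h1⟩ := hzero ρ hρ
    have hχ0 : χ ⟨0, by omega⟩ = c * ψ ⟨0, by omega⟩ := by
      rw [← hsum]; simp [h0]
    have hχ1 : χ ⟨1, by omega⟩ = c * ψ ⟨1, by omega⟩ := by
      rw [← hsum]; simp [h1]
    rw [hχ0, hχ1, mul_div_mul_left _ _ hc]
  refine ⟨hrankM, key, ?_⟩
  intro ψ' hψ'M hψ'pos
  have hψ'L : ψ' ∉ KL := by
    intro h
    exact absurd (hzero ψ' h).1 (ne_of_gt (hψ'pos _))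
  exact (key ψ' hψ'M hψ'L).symm
end

section
/- For the EnvZ/OmpR network with positive rate constants k₁,…,k₁₅, any real numbers x^{C₁}, x^{C₃}, x^{C₈}, x^{C₁₁} arising as monomial values at a steady state satisfy the two relations: (k₁k₃/k₂)·x^{C₁} − (k₄+k₅)·x^{C₃} = 0 and k₅·x^{C₃} − (k₁₂k₁₀/(k₁₁+k₁₂))·x^{C₈} − (k₁₅k₁₃/(k₁₄+k₁₅))·x^{C₁₁} = 0. Concretely: let u₁ = [EnvZ-ADP], u₃ = [EnvZ-ATP], u₈ = [EnvZ-ATP][OmpR-P], u₁₁ = [EnvZ-ADP][OmpR-P]; if the nine species concentrations form a steady state of the mass-action ODEs of the extended EnvZ/OmpR network, then both relations hold. -/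
/-- for the extended EnvZ/OmpR network (species
S₁=EnvZ-P-OmpR, S₂=EnvZ-ATP-OmpR-P, S₃=EnvZ-ADP-OmpR-P, S₄=EnvZ, S₅=OmpR,
S₆=OmpR-P, S₇=EnvZ-ATP, S₈=EnvZ-ADP, S₉=EnvZ-P) with positive rate constants,
at any steady state the complex monomials
`u₁ = [EnvZ-ADP]`, `u₃ = [EnvZ-ATP]`, `u₈ = [EnvZ-ATP][OmpR-P]`,
`u₁₁ = [EnvZ-ADP][OmpR-P]` satisfy the two type-1 invariant relations of
Corollary 1. -/
theorem stmt11 (k₁ k₂ k₃ k₄ k₅ k₆ k₇ k₈ k₉ k₁₀ k₁₁ k₁₂ k₁₃ k₁₄ k₁₅ : ℝ)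
    (hk₁ : 0 < k₁) (hk₂ : 0 < k₂) (hk₃ : 0 < k₃) (hk₄ : 0 < k₄) (hk₅ : 0 < k₅)
    (hk₆ : 0 < k₆) (hk₇ : 0 < k₇) (hk₈ : 0 < k₈) (hk₉ : 0 < k₉) (hk₁₀ : 0 < k₁₀)
    (hk₁₁ : 0 < k₁₁) (hk₁₂ : 0 < k₁₂) (hk₁₃ : 0 < k₁₃) (hk₁₄ : 0 < k₁₄)
    (hk₁₅ : 0 < k₁₅)
    (S₁ S₂ S₃ S₄ S₅ S₆ S₇ S₈ S₉ : ℝ)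
    -- steady-state equations of the mass-action ODEs:
    (h₁ : k₆ * S₅ * S₉ - (k₇ + k₈) * S₁ + k₉ * S₄ * S₆ = 0)
    (h₂ : k₁₀ * S₆ * S₇ - (k₁₁ + k₁₂) * S₂ = 0)
    (h₃ : k₁₃ * S₆ * S₈ - (k₁₄ + k₁₅) * S₃ = 0)
    (h₄ : k₁ * S₈ - (k₂ + k₃) * S₄ + k₄ * S₇ + k₈ * S₁ - k₉ * S₄ * S₆ = 0)
    (h₅ : k₇ * S₁ - k₆ * S₅ * S₉ + k₁₂ * S₂ + k₁₅ * S₃ = 0)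
    (h₆ : k₈ * S₁ - k₉ * S₄ * S₆ - k₁₀ * S₆ * S₇ + k₁₁ * S₂
      - k₁₃ * S₆ * S₈ + k₁₄ * S₃ = 0)
    (h₇ : k₃ * S₄ - (k₄ + k₅) * S₇ - k₁₀ * S₆ * S₇ + (k₁₁ + k₁₂) * S₂ = 0)
    (h₈ : k₂ * S₄ - k₁ * S₈ - k₁₃ * S₆ * S₈ + (k₁₄ + k₁₅) * S₃ = 0)
    (h₉ : k₅ * S₇ - k₆ * S₅ * S₉ + k₇ * S₁ = 0)
    (u₁ u₃ u₈ u₁₁ : ℝ)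
    (hu₁ : u₁ = S₈) (hu₃ : u₃ = S₇) (hu₈ : u₈ = S₇ * S₆) (hu₁₁ : u₁₁ = S₈ * S₆) :
    (k₁ * k₃ / k₂) * u₁ - (k₄ + k₅) * u₃ = 0 ∧
    k₅ * u₃ - (k₁₂ * k₁₀ / (k₁₁ + k₁₂)) * u₈
      - (k₁₅ * k₁₃ / (k₁₄ + k₁₅)) * u₁₁ = 0 := by
  subst hu₁ hu₃ hu₈ hu₁₁
  have hk2 : k₂ ≠ 0 := hk₂.ne'
  have hd1 : k₁₁ + k₁₂ ≠ 0 := by positivity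
  have hd2 : k₁₄ + k₁₅ ≠ 0 := by positivity
  constructor
  · field_simp
    linear_combination k₂ * h₇ + k₂ * h₂ - k₃ * (h₈ + h₃)
  · field_simp
    linear_combination ((k₁₁ + k₁₂) * (k₁₄ + k₁₅)) * (h₉ - h₅)
      - (k₁₂ * (k₁₄ + k₁₅)) * h₂ - (k₁₅ * (k₁₁ + k₁₂)) * h₃
end

section
/- For the extended EnvZ/OmpR network with positive rate constants k₁,…,k₁₅, at any steady state with [EnvZ-ATP] ≠ 0, the concentration of OmpR-P equals k₁k₃k₅(k₁₁+k₁₂)(k₁₄+k₁₅) / (k₁k₃k₁₀k₁₂(k₁₄+k₁₅) + k₂k₁₃k₁₅(k₄+k₅)(k₁₁+k₁₂)). In particular this value depends only on the rate constants (absolute concentration robustness). -/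
/-- absolute concentration robustness for OmpR-P in the extended
EnvZ/OmpR network: at any steady state with `[EnvZ-ATP] = S₇ ≠ 0`, the
concentration `S₆ = [OmpR-P]` equals an explicit expression in the rate constants
only. -/
theorem stmt12 (k₁ k₂ k₃ k₄ k₅ k₆ k₇ k₈ k₉ k₁₀ k₁₁ k₁₂ k₁₃ k₁₄ k₁₅ : ℝ)
    (hk₁ : 0 < k₁) (hk₂ : 0 < k₂) (hk₃ : 0 < k₃) (hk₄ : 0 < k₄) (hk₅ : 0 < k₅)
    (hk₆ : 0 < k₆) (hk₇ : 0 < k₇) (hk₈ : 0 < k₈) (hk₉ : 0 < k₉) (hk₁₀ : 0 < k₁₀)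
    (hk₁₁ : 0 < k₁₁) (hk₁₂ : 0 < k₁₂) (hk₁₃ : 0 < k₁₃) (hk₁₄ : 0 < k₁₄)
    (hk₁₅ : 0 < k₁₅)
    (S₁ S₂ S₃ S₄ S₅ S₆ S₇ S₈ S₉ : ℝ)
    -- steady-state equations of the mass-action ODEs:
    (h₁ : k₆ * S₅ * S₉ - (k₇ + k₈) * S₁ + k₉ * S₄ * S₆ = 0)
    (h₂ : k₁₀ * S₆ * S₇ - (k₁₁ + k₁₂) * S₂ = 0)
    (h₃ : k₁₃ * S₆ * S₈ - (k₁₄ + k₁₅) * S₃ = 0)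
    (h₄ : k₁ * S₈ - (k₂ + k₃) * S₄ + k₄ * S₇ + k₈ * S₁ - k₉ * S₄ * S₆ = 0)
    (h₅ : k₇ * S₁ - k₆ * S₅ * S₉ + k₁₂ * S₂ + k₁₅ * S₃ = 0)
    (h₆ : k₈ * S₁ - k₉ * S₄ * S₆ - k₁₀ * S₆ * S₇ + k₁₁ * S₂
      - k₁₃ * S₆ * S₈ + k₁₄ * S₃ = 0)
    (h₇ : k₃ * S₄ - (k₄ + k₅) * S₇ - k₁₀ * S₆ * S₇ + (k₁₁ + k₁₂) * S₂ = 0)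
    (h₈ : k₂ * S₄ - k₁ * S₈ - k₁₃ * S₆ * S₈ + (k₁₄ + k₁₅) * S₃ = 0)
    (h₉ : k₅ * S₇ - k₆ * S₅ * S₉ + k₇ * S₁ = 0)
    (hS₇ : S₇ ≠ 0) :
    S₆ = k₁ * k₃ * k₅ * (k₁₁ + k₁₂) * (k₁₄ + k₁₅) /
      (k₁ * k₃ * k₁₀ * k₁₂ * (k₁₄ + k₁₅)
        + k₂ * k₁₃ * k₁₅ * (k₄ + k₅) * (k₁₁ + k₁₂)) := by

  have e2 : (k₁₁ + k₁₂) * S₂ = k₁₀ * S₆ * S₇ := by linarith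
  have e3 : (k₁₄ + k₁₅) * S₃ = k₁₃ * S₆ * S₈ := by linarith
  have e8 : k₁ * S₈ = k₂ * S₄ := by linarith
  have e7 : k₃ * S₄ = (k₄ + k₅) * S₇ := by linarith
  have eA : k₁₂ * S₂ + k₁₅ * S₃ = k₅ * S₇ := by linarith
  have hD : (0:ℝ) < k₁ * k₃ * k₁₀ * k₁₂ * (k₁₄ + k₁₅)
      + k₂ * k₁₃ * k₁₅ * (k₄ + k₅) * (k₁₁ + k₁₂) := by positivity
  rw [eq_div_iff (ne_of_gt hD)]
  apply mul_right_cancel₀ hS₇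
  linear_combination (k₁ * k₃ * (k₁₁ + k₁₂) * (k₁₄ + k₁₅)) * eA
    - (k₁ * k₃ * k₁₂ * (k₁₄ + k₁₅)) * e2
    - (k₁ * k₃ * k₁₅ * (k₁₁ + k₁₂)) * e3
    - (k₃ * k₁₃ * k₁₅ * (k₁₁ + k₁₂) * S₆) * e8
    - (k₂ * k₁₃ * k₁₅ * (k₁₁ + k₁₂) * S₆) * e7
end

section
/- For the modified EnvZ/OmpR network (with added spontaneous dephosphorylation OmpR-P → OmpR at rate k₁₆), at any positive steady state: [OmpR-P] = ((k₃k₅/(k₄+k₅))[EnvZ]) / (k₁₆ + (k₁₀k₁₂/(k₁₁+k₁₂))[EnvZ-ATP] + (k₁₃k₁₅/(k₁₄+k₁₅))[EnvZ-ADP]). -/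
/-- for the modified EnvZ/OmpR network (spontaneous
dephosphorylation OmpR-P → OmpR with constant k₁₆ added), at any positive steady
state `[OmpR-P]` is expressed via `[EnvZ] = S₄`, `[EnvZ-ATP] = S₇`,
`[EnvZ-ADP] = S₈` as in the second invariant of Equation (13). -/
theorem stmt15 (k₁ k₂ k₃ k₄ k₅ k₆ k₇ k₈ k₉ k₁₀ k₁₁ k₁₂ k₁₃ k₁₄ k₁₅ k₁₆ : ℝ)
    (hk₁ : 0 < k₁) (hk₂ : 0 < k₂) (hk₃ : 0 < k₃) (hk₄ : 0 < k₄) (hk₅ : 0 < k₅)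
    (hk₆ : 0 < k₆) (hk₇ : 0 < k₇) (hk₈ : 0 < k₈) (hk₉ : 0 < k₉) (hk₁₀ : 0 < k₁₀)
    (hk₁₁ : 0 < k₁₁) (hk₁₂ : 0 < k₁₂) (hk₁₃ : 0 < k₁₃) (hk₁₄ : 0 < k₁₄)
    (hk₁₅ : 0 < k₁₅) (hk₁₆ : 0 < k₁₆)
    (S₁ S₂ S₃ S₄ S₅ S₆ S₇ S₈ S₉ : ℝ)
    (hS₁ : 0 < S₁) (hS₂ : 0 < S₂) (hS₃ : 0 < S₃) (hS₄ : 0 < S₄) (hS₅ : 0 < S₅)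
    (hS₆ : 0 < S₆) (hS₇ : 0 < S₇) (hS₈ : 0 < S₈) (hS₉ : 0 < S₉)
    -- steady-state equations (15)–(23) of the modified EnvZ/OmpR system:
    (h₁ : k₆ * S₅ * S₉ - (k₇ + k₈) * S₁ + k₉ * S₄ * S₆ = 0)
    (h₂ : k₁₀ * S₆ * S₇ - (k₁₁ + k₁₂) * S₂ = 0)
    (h₃ : k₁₃ * S₆ * S₈ - (k₁₄ + k₁₅) * S₃ = 0)
    (h₄ : k₁ * S₈ - (k₂ + k₃) * S₄ + k₄ * S₇ + k₈ * S₁ - k₉ * S₄ * S₆ = 0)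
    (h₅ : k₇ * S₁ - k₆ * S₅ * S₉ + k₁₂ * S₂ + k₁₅ * S₃ + k₁₆ * S₆ = 0)
    (h₆ : k₈ * S₁ - k₉ * S₄ * S₆ - k₁₀ * S₆ * S₇ + k₁₁ * S₂
      - k₁₃ * S₆ * S₈ + k₁₄ * S₃ - k₁₆ * S₆ = 0)
    (h₇ : k₃ * S₄ - (k₄ + k₅) * S₇ - k₁₀ * S₆ * S₇ + (k₁₁ + k₁₂) * S₂ = 0)
    (h₈ : k₂ * S₄ - k₁ * S₈ - k₁₃ * S₆ * S₈ + (k₁₄ + k₁₅) * S₃ = 0)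
    (h₉ : k₅ * S₇ - k₆ * S₅ * S₉ + k₇ * S₁ = 0)
    :
    S₆ = (k₃ * k₅ / (k₄ + k₅)) * S₄ /
      (k₁₆ + (k₁₀ * k₁₂ / (k₁₁ + k₁₂)) * S₇ + (k₁₃ * k₁₅ / (k₁₄ + k₁₅)) * S₈) := by
  have h45 : (k₄ + k₅) ≠ 0 := by positivity
  have h1112 : (k₁₁ + k₁₂) ≠ 0 := by positivity
  have h1415 : (k₁₄ + k₁₅) ≠ 0 := by positivity
  have hd : k₁₆ + (k₁₀ * k₁₂ / (k₁₁ + k₁₂)) * S₇ + (k₁₃ * k₁₅ / (k₁₄ + k₁₅)) * S₈ ≠ 0 := by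
    positivity
  have key : S₆ * ((k₁₆ * (k₁₁ + k₁₂) * (k₁₄ + k₁₅) + k₁₀ * k₁₂ * S₇ * (k₁₄ + k₁₅)
      + k₁₃ * k₁₅ * S₈ * (k₁₁ + k₁₂)) * (k₄ + k₅))
      = k₃ * k₅ * S₄ * ((k₁₁ + k₁₂) * (k₁₄ + k₁₅)) := by
    linear_combination ((k₄+k₅)*k₁₂*(k₁₄+k₁₅) - k₅*(k₁₁+k₁₂)*(k₁₄+k₁₅)) * h₂
      + (k₄+k₅)*k₁₅*(k₁₁+k₁₂) * h₃
      + (k₄+k₅)*(k₁₁+k₁₂)*(k₁₄+k₁₅) * (h₅ - h₉)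
      - k₅*(k₁₁+k₁₂)*(k₁₄+k₁₅) * h₇
  rw [eq_div_iff hd]
  field_simp
  linear_combination key
end

section
/- For the modified EnvZ/OmpR network with positive rate constants k₁,…,k₁₆, at any positive steady state the concentration of OmpR-P is strictly bounded above by (k₁/k₂)·(k₃k₅/(k₄+k₅))·((k₁₄+k₁₅)/(k₁₃k₁₅)) and also by k₅·(k₁₁+k₁₂)/(k₁₀k₁₂); these bounds depend only on the rate constants. -/
/-!
Sums of steady-state equations give `k₂ S₄ = k₁ S₈`, `(k₄ + k₅) S₇ = k₃ S₄` and the flux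
balance `k₅ S₇ = k₁₂ S₂ + k₁₅ S₃ + k₁₆ S₆`; since `k₁₆ S₆ > 0`, each of the catalytic fluxes
`k₁₂ S₂`, `k₁₅ S₃` is strictly below `k₅ S₇`. OmpR-P binds `S₇` and `S₈` into the complexes
`S₂` and `S₃`, and at steady state a substrate whose complex has catalytic flux below `V e`
(with `e` its binding partner) is below `V (koff + kcat) / (kon kcat)`.
-/

-- Michaelis–Menten scheme `s + e ⇌ c → …` with rates `kon`, `koff`, `kcat`.
theorem lt_mul_div_of_complex_steady_state {kon koff kcat V s e c : ℝ}
    (hkon : 0 < kon) (hkoff : 0 ≤ koff) (hkcat : 0 < kcat) (he : 0 < e)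
    (hc : kon * s * e = (koff + kcat) * c) (hflux : kcat * c < V * e) :
    s < V * ((koff + kcat) / (kon * kcat)) := by
  rw [mul_div_assoc', lt_div_iff₀ (by positivity)]
  refine lt_of_mul_lt_mul_right ?_ he.le
  calc s * (kon * kcat) * e = (koff + kcat) * (kcat * c) := by linear_combination kcat * hc
    _ < (koff + kcat) * (V * e) := by gcongr
    _ = V * (koff + kcat) * e := by ring

theorem stmt16_general (k₁ k₂ k₃ k₄ k₅ k₆ k₇ k₁₀ k₁₁ k₁₂ k₁₃ k₁₄ k₁₅ k₁₆ : ℝ)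
    (hk₂ : 0 < k₂) (hk₄ : 0 < k₄) (hk₅ : 0 < k₅) (hk₁₀ : 0 < k₁₀)
    (hk₁₁ : 0 < k₁₁) (hk₁₂ : 0 < k₁₂) (hk₁₃ : 0 < k₁₃) (hk₁₄ : 0 < k₁₄)
    (hk₁₅ : 0 < k₁₅) (hk₁₆ : 0 < k₁₆)
    (S₁ S₂ S₃ S₄ S₅ S₆ S₇ S₈ S₉ : ℝ)
    (hS₂ : 0 < S₂) (hS₃ : 0 < S₃) (hS₆ : 0 < S₆) (hS₇ : 0 < S₇) (hS₈ : 0 < S₈)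
    -- steady-state equations (15)–(23) of the modified EnvZ/OmpR system:
    (h₂ : k₁₀ * S₆ * S₇ - (k₁₁ + k₁₂) * S₂ = 0)
    (h₃ : k₁₃ * S₆ * S₈ - (k₁₄ + k₁₅) * S₃ = 0)
    (h₅ : k₇ * S₁ - k₆ * S₅ * S₉ + k₁₂ * S₂ + k₁₅ * S₃ + k₁₆ * S₆ = 0)
    (h₇ : k₃ * S₄ - (k₄ + k₅) * S₇ - k₁₀ * S₆ * S₇ + (k₁₁ + k₁₂) * S₂ = 0)
    (h₈ : k₂ * S₄ - k₁ * S₈ - k₁₃ * S₆ * S₈ + (k₁₄ + k₁₅) * S₃ = 0)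
    (h₉ : k₅ * S₇ - k₆ * S₅ * S₉ + k₇ * S₁ = 0)
    :
    S₆ < (k₁ / k₂) * (k₃ * k₅ / (k₄ + k₅)) * ((k₁₄ + k₁₅) / (k₁₃ * k₁₅)) ∧
    S₆ < k₅ * (k₁₁ + k₁₂) / (k₁₀ * k₁₂) := by
  have hS₄S₈ : k₂ * S₄ = k₁ * S₈ := by linear_combination h₈ + h₃
  have hS₇S₄ : (k₄ + k₅) * S₇ = k₃ * S₄ := by linear_combination -h₇ - h₂
  have hflux : k₅ * S₇ = k₁₂ * S₂ + k₁₅ * S₃ + k₁₆ * S₆ := by linear_combination h₉ - h₅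
  have hk₁₆S₆ : 0 < k₁₆ * S₆ := by positivity
  have hk₁₂S₂ : 0 ≤ k₁₂ * S₂ := by positivity
  have hk₁₅S₃ : 0 ≤ k₁₅ * S₃ := by positivity
  constructor
  · refine lt_mul_div_of_complex_steady_state (c := S₃) hk₁₃ hk₁₄.le hk₁₅ hS₈
      (by linear_combination h₃) ?_
    have hV : k₁ / k₂ * (k₃ * k₅ / (k₄ + k₅)) * S₈ = k₅ * S₇ := by
      field_simp
      linear_combination -k₃ * hS₄S₈ - k₂ * hS₇S₄
    linarith only [hV, hflux, hk₁₂S₂, hk₁₆S₆]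
  · rw [mul_div_assoc]
    exact lt_mul_div_of_complex_steady_state (c := S₂) hk₁₀ hk₁₁.le hk₁₂ hS₇
      (by linear_combination h₂) (by linarith only [hflux, hk₁₅S₃, hk₁₆S₆])

/-- for the modified EnvZ/OmpR network, at any positive steady
state `[OmpR-P] = S₆` is strictly bounded above by two expressions depending only
on the rate constants (Equation (14)). -/
theorem stmt16 (k₁ k₂ k₃ k₄ k₅ k₆ k₇ k₈ k₉ k₁₀ k₁₁ k₁₂ k₁₃ k₁₄ k₁₅ k₁₆ : ℝ)
    (hk₁ : 0 < k₁) (hk₂ : 0 < k₂) (hk₃ : 0 < k₃) (hk₄ : 0 < k₄) (hk₅ : 0 < k₅)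
    (hk₆ : 0 < k₆) (hk₇ : 0 < k₇) (hk₈ : 0 < k₈) (hk₉ : 0 < k₉) (hk₁₀ : 0 < k₁₀)
    (hk₁₁ : 0 < k₁₁) (hk₁₂ : 0 < k₁₂) (hk₁₃ : 0 < k₁₃) (hk₁₄ : 0 < k₁₄)
    (hk₁₅ : 0 < k₁₅) (hk₁₆ : 0 < k₁₆)
    (S₁ S₂ S₃ S₄ S₅ S₆ S₇ S₈ S₉ : ℝ)
    (hS₁ : 0 < S₁) (hS₂ : 0 < S₂) (hS₃ : 0 < S₃) (hS₄ : 0 < S₄) (hS₅ : 0 < S₅)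
    (hS₆ : 0 < S₆) (hS₇ : 0 < S₇) (hS₈ : 0 < S₈) (hS₉ : 0 < S₉)
    -- steady-state equations (15)–(23) of the modified EnvZ/OmpR system:
    (h₁ : k₆ * S₅ * S₉ - (k₇ + k₈) * S₁ + k₉ * S₄ * S₆ = 0)
    (h₂ : k₁₀ * S₆ * S₇ - (k₁₁ + k₁₂) * S₂ = 0)
    (h₃ : k₁₃ * S₆ * S₈ - (k₁₄ + k₁₅) * S₃ = 0)
    (h₄ : k₁ * S₈ - (k₂ + k₃) * S₄ + k₄ * S₇ + k₈ * S₁ - k₉ * S₄ * S₆ = 0)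
    (h₅ : k₇ * S₁ - k₆ * S₅ * S₉ + k₁₂ * S₂ + k₁₅ * S₃ + k₁₆ * S₆ = 0)
    (h₆ : k₈ * S₁ - k₉ * S₄ * S₆ - k₁₀ * S₆ * S₇ + k₁₁ * S₂
      - k₁₃ * S₆ * S₈ + k₁₄ * S₃ - k₁₆ * S₆ = 0)
    (h₇ : k₃ * S₄ - (k₄ + k₅) * S₇ - k₁₀ * S₆ * S₇ + (k₁₁ + k₁₂) * S₂ = 0)
    (h₈ : k₂ * S₄ - k₁ * S₈ - k₁₃ * S₆ * S₈ + (k₁₄ + k₁₅) * S₃ = 0)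
    (h₉ : k₅ * S₇ - k₆ * S₅ * S₉ + k₇ * S₁ = 0)
    :
    S₆ < (k₁ / k₂) * (k₃ * k₅ / (k₄ + k₅)) * ((k₁₄ + k₁₅) / (k₁₃ * k₁₅)) ∧
    S₆ < k₅ * (k₁₁ + k₁₂) / (k₁₀ * k₁₂) :=
  stmt16_general k₁ k₂ k₃ k₄ k₅ k₆ k₇ k₁₀ k₁₁ k₁₂ k₁₃ k₁₄ k₁₅ k₁₆ hk₂ hk₄ hk₅ hk₁₀ hk₁₁ hk₁₂ hk₁₃
    hk₁₄ hk₁₅ hk₁₆ S₁ S₂ S₃ S₄ S₅ S₆ S₇ S₈ S₉ hS₂ hS₃ hS₆ hS₇ hS₈ h₂ h₃ h₅ h₇ h₈ h₉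
end

section
/- For the modified EnvZ/OmpR system (equations (15)–(23)) with positive rate constants, at any positive steady state: S₆ = k₃k₅S₄ / ((k₄+k₅)(γS₄ + k₁₆)), where γ = (k₁₀k₁₂/(k₁₁+k₁₂))·(k₃/(k₄+k₅)) + (k₁₃k₁₅/(k₁₄+k₁₅))·(k₂/k₁). Consequently S₆ < k₃k₅/((k₄+k₅)γ), and S₆ is a strictly increasing function of S₄, so OmpR-P does not exhibit absolute concentration robustness. -/
/-- for the modified EnvZ/OmpR system at any positive steady state,
`S₆ = k₃k₅S₄/((k₄+k₅)(γS₄+k₁₆))` with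
`γ = (k₁₀k₁₂/(k₁₁+k₁₂))·(k₃/(k₄+k₅)) + (k₁₃k₁₅/(k₁₄+k₁₅))·(k₂/k₁)`; consequently
`S₆ < k₃k₅/((k₄+k₅)γ)`, and the function `x ↦ k₃k₅x/((k₄+k₅)(γx+k₁₆))` is
strictly increasing on `[0,∞)` (so OmpR-P does not exhibit ACR). -/
theorem stmt18 (k₁ k₂ k₃ k₄ k₅ k₆ k₇ k₈ k₉ k₁₀ k₁₁ k₁₂ k₁₃ k₁₄ k₁₅ k₁₆ : ℝ)
    (hk₁ : 0 < k₁) (hk₂ : 0 < k₂) (hk₃ : 0 < k₃) (hk₄ : 0 < k₄) (hk₅ : 0 < k₅)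
    (hk₆ : 0 < k₆) (hk₇ : 0 < k₇) (hk₈ : 0 < k₈) (hk₉ : 0 < k₉) (hk₁₀ : 0 < k₁₀)
    (hk₁₁ : 0 < k₁₁) (hk₁₂ : 0 < k₁₂) (hk₁₃ : 0 < k₁₃) (hk₁₄ : 0 < k₁₄)
    (hk₁₅ : 0 < k₁₅) (hk₁₆ : 0 < k₁₆)
    (S₁ S₂ S₃ S₄ S₅ S₆ S₇ S₈ S₉ : ℝ)
    (hS₁ : 0 < S₁) (hS₂ : 0 < S₂) (hS₃ : 0 < S₃) (hS₄ : 0 < S₄) (hS₅ : 0 < S₅)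
    (hS₆ : 0 < S₆) (hS₇ : 0 < S₇) (hS₈ : 0 < S₈) (hS₉ : 0 < S₉)
    -- steady-state equations (15)–(23) of the modified EnvZ/OmpR system:
    (h₁ : k₆ * S₅ * S₉ - (k₇ + k₈) * S₁ + k₉ * S₄ * S₆ = 0)
    (h₂ : k₁₀ * S₆ * S₇ - (k₁₁ + k₁₂) * S₂ = 0)
    (h₃ : k₁₃ * S₆ * S₈ - (k₁₄ + k₁₅) * S₃ = 0)
    (h₄ : k₁ * S₈ - (k₂ + k₃) * S₄ + k₄ * S₇ + k₈ * S₁ - k₉ * S₄ * S₆ = 0)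
    (h₅ : k₇ * S₁ - k₆ * S₅ * S₉ + k₁₂ * S₂ + k₁₅ * S₃ + k₁₆ * S₆ = 0)
    (h₆ : k₈ * S₁ - k₉ * S₄ * S₆ - k₁₀ * S₆ * S₇ + k₁₁ * S₂
      - k₁₃ * S₆ * S₈ + k₁₄ * S₃ - k₁₆ * S₆ = 0)
    (h₇ : k₃ * S₄ - (k₄ + k₅) * S₇ - k₁₀ * S₆ * S₇ + (k₁₁ + k₁₂) * S₂ = 0)
    (h₈ : k₂ * S₄ - k₁ * S₈ - k₁₃ * S₆ * S₈ + (k₁₄ + k₁₅) * S₃ = 0)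
    (h₉ : k₅ * S₇ - k₆ * S₅ * S₉ + k₇ * S₁ = 0)
    (γ : ℝ)
    (hγ : γ = (k₁₀ * k₁₂ / (k₁₁ + k₁₂)) * (k₃ / (k₄ + k₅))
      + (k₁₃ * k₁₅ / (k₁₄ + k₁₅)) * (k₂ / k₁)) :
    S₆ = k₃ * k₅ * S₄ / ((k₄ + k₅) * (γ * S₄ + k₁₆)) ∧
    S₆ < k₃ * k₅ / ((k₄ + k₅) * γ) ∧
    StrictMonoOn (fun x : ℝ => k₃ * k₅ * x / ((k₄ + k₅) * (γ * x + k₁₆)))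
      (Set.Ici 0) := by
  have hk45 : (0:ℝ) < k₄ + k₅ := by linarith
  have hk1112 : (0:ℝ) < k₁₁ + k₁₂ := by linarith
  have hk1415 : (0:ℝ) < k₁₄ + k₁₅ := by linarith
  have hγpos : 0 < γ := by rw [hγ]; positivity
  have hA : (k₄ + k₅) * S₇ = k₃ * S₄ := by linarith
  have hB : k₁ * S₈ = k₂ * S₄ := by linarith
  have hC : (k₁₁ + k₁₂) * S₂ = k₁₀ * S₆ * S₇ := by linarith
  have hD : (k₁₄ + k₁₅) * S₃ = k₁₃ * S₆ * S₈ := by linarith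
  have key : k₅ * S₇ = k₁₂ * S₂ + k₁₅ * S₃ + k₁₆ * S₆ := by linarith
  have hden : 0 < (k₄ + k₅) * (γ * S₄ + k₁₆) := by positivity
  have hG : γ * (k₁ * (k₁₁ + k₁₂) * (k₁₄ + k₁₅) * (k₄ + k₅))
      = k₁₀ * k₁₂ * k₃ * k₁ * (k₁₄ + k₁₅)
        + k₁₃ * k₁₅ * k₂ * (k₁₁ + k₁₂) * (k₄ + k₅) := by
    rw [hγ]; field_simp
  have hmain : S₆ * ((k₄ + k₅) * (γ * S₄ + k₁₆)) * (k₁ * (k₁₁ + k₁₂) * (k₁₄ + k₁₅))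
      = k₃ * k₅ * S₄ * (k₁ * (k₁₁ + k₁₂) * (k₁₄ + k₁₅)) := by
    linear_combination (S₆ * S₄) * hG
      - (k₁ * (k₁₁ + k₁₂) * (k₁₄ + k₁₅) * (k₄ + k₅)) * key
      + (k₅ * (k₁ * (k₁₁ + k₁₂) * (k₁₄ + k₁₅))) * hA
      - (k₁₂ * k₁ * (k₁₄ + k₁₅) * (k₄ + k₅)) * hC
      - (k₁₂ * k₁ * (k₁₄ + k₁₅) * k₁₀ * S₆) * hA
      - (k₁₅ * k₁ * (k₁₁ + k₁₂) * (k₄ + k₅)) * hD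
      - (k₁₅ * (k₁₁ + k₁₂) * (k₄ + k₅) * k₁₃ * S₆) * hB
  have heq : S₆ = k₃ * k₅ * S₄ / ((k₄ + k₅) * (γ * S₄ + k₁₆)) := by
    rw [eq_div_iff (ne_of_gt hden)]
    exact mul_right_cancel₀ (by positivity) hmain
  refine ⟨heq, ?_, ?_⟩
  · rw [heq, div_lt_div_iff₀ hden (by positivity)]
    have e : k₃ * k₅ * ((k₄ + k₅) * (γ * S₄ + k₁₆))
        - k₃ * k₅ * S₄ * ((k₄ + k₅) * γ) = k₃ * k₅ * ((k₄ + k₅) * k₁₆) := by ring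
    linarith [e, mul_pos (mul_pos hk₃ hk₅) (mul_pos hk45 hk₁₆)]
  · intro x hx y hy hxy
    simp only [Set.mem_Ici] at hx hy
    have hdx : 0 < (k₄ + k₅) * (γ * x + k₁₆) := by positivity
    have hdy : 0 < (k₄ + k₅) * (γ * y + k₁₆) := by positivity
    simp only
    rw [div_lt_div_iff₀ hdx hdy]
    have e : k₃ * k₅ * y * ((k₄ + k₅) * (γ * x + k₁₆))
        - k₃ * k₅ * x * ((k₄ + k₅) * (γ * y + k₁₆))
        = k₃ * k₅ * ((k₄ + k₅) * (k₁₆ * (y - x))) := by ring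
    linarith [e, mul_pos (mul_pos hk₃ hk₅)
      (mul_pos hk45 (mul_pos hk₁₆ (sub_pos.2 hxy)))]
end

section
/- For the modified EnvZ/OmpR system with positive rate constants, for every choice of positive values S₄, S₉ > 0, defining S₇ = (k₃/(k₄+k₅))S₄, S₈ = (k₂/k₁)S₄, S₆ = k₃k₅S₄/((k₄+k₅)(γS₄+k₁₆)), S₂ = (k₁₀/(k₁₁+k₁₂))S₇S₆, S₃ = (k₁₃/(k₁₄+k₁₅))S₈S₆, S₅ = k₃k₅(k₇+k₈)(αS₄+k₁₆)S₄/(k₆k₈(k₄+k₅)(γS₄+k₁₆)S₉), and S₁ = (k₆/(k₇+k₈))S₅S₉ + (k₉/(k₇+k₈))S₄S₆ (with α = β+γ, β = k₇k₉/(k₇+k₈), γ as before), the resulting point (S₁,…,S₉) is a positive steady state of the system. In particular the system has a two-parameter family of positive steady states. -/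
private lemma aux_cancel {c x : ℝ} (hc : c ≠ 0) (h : c * x = 0) : x = 0 := by
  rcases mul_eq_zero.mp h with h | h
  · exact absurd h hc
  · exact h

/-- for the modified EnvZ/OmpR system with positive rate constants,
every choice of `S₄, S₉ > 0`, with the remaining concentrations defined by the
explicit formulas of the appendix (with `β = k₇k₉/(k₇+k₈)`, `γ` as before and
`α = β + γ`), yields a positive steady state; hence there is a two-parameter
family of positive steady states. -/
theorem stmt19 (k₁ k₂ k₃ k₄ k₅ k₆ k₇ k₈ k₉ k₁₀ k₁₁ k₁₂ k₁₃ k₁₄ k₁₅ k₁₆ : ℝ)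
    (hk₁ : 0 < k₁) (hk₂ : 0 < k₂) (hk₃ : 0 < k₃) (hk₄ : 0 < k₄) (hk₅ : 0 < k₅)
    (hk₆ : 0 < k₆) (hk₇ : 0 < k₇) (hk₈ : 0 < k₈) (hk₉ : 0 < k₉) (hk₁₀ : 0 < k₁₀)
    (hk₁₁ : 0 < k₁₁) (hk₁₂ : 0 < k₁₂) (hk₁₃ : 0 < k₁₃) (hk₁₄ : 0 < k₁₄)
    (hk₁₅ : 0 < k₁₅) (hk₁₆ : 0 < k₁₆)
    (β γ α : ℝ)
    (hβ : β = k₇ * k₉ / (k₇ + k₈))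
    (hγ : γ = (k₁₀ * k₁₂ / (k₁₁ + k₁₂)) * (k₃ / (k₄ + k₅))
      + (k₁₃ * k₁₅ / (k₁₄ + k₁₅)) * (k₂ / k₁))
    (hα : α = β + γ)
    (S₄ S₉ : ℝ) (hS₄ : 0 < S₄) (hS₉ : 0 < S₉)
    (S₁ S₂ S₃ S₅ S₆ S₇ S₈ : ℝ)
    (hS₇def : S₇ = (k₃ / (k₄ + k₅)) * S₄)
    (hS₈def : S₈ = (k₂ / k₁) * S₄)
    (hS₆def : S₆ = k₃ * k₅ * S₄ / ((k₄ + k₅) * (γ * S₄ + k₁₆)))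
    (hS₂def : S₂ = (k₁₀ / (k₁₁ + k₁₂)) * S₇ * S₆)
    (hS₃def : S₃ = (k₁₃ / (k₁₄ + k₁₅)) * S₈ * S₆)
    (hS₅def : S₅ = k₃ * k₅ * (k₇ + k₈) * (α * S₄ + k₁₆) * S₄ /
      (k₆ * k₈ * (k₄ + k₅) * (γ * S₄ + k₁₆) * S₉))
    (hS₁def : S₁ = (k₆ / (k₇ + k₈)) * S₅ * S₉ + (k₉ / (k₇ + k₈)) * S₄ * S₆) :
    (0 < S₁ ∧ 0 < S₂ ∧ 0 < S₃ ∧ 0 < S₅ ∧ 0 < S₆ ∧ 0 < S₇ ∧ 0 < S₈) ∧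
    k₆ * S₅ * S₉ - (k₇ + k₈) * S₁ + k₉ * S₄ * S₆ = 0 ∧
    k₁₀ * S₆ * S₇ - (k₁₁ + k₁₂) * S₂ = 0 ∧
    k₁₃ * S₆ * S₈ - (k₁₄ + k₁₅) * S₃ = 0 ∧
    k₁ * S₈ - (k₂ + k₃) * S₄ + k₄ * S₇ + k₈ * S₁ - k₉ * S₄ * S₆ = 0 ∧
    k₇ * S₁ - k₆ * S₅ * S₉ + k₁₂ * S₂ + k₁₅ * S₃ + k₁₆ * S₆ = 0 ∧
    k₈ * S₁ - k₉ * S₄ * S₆ - k₁₀ * S₆ * S₇ + k₁₁ * S₂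
      - k₁₃ * S₆ * S₈ + k₁₄ * S₃ - k₁₆ * S₆ = 0 ∧
    k₃ * S₄ - (k₄ + k₅) * S₇ - k₁₀ * S₆ * S₇ + (k₁₁ + k₁₂) * S₂ = 0 ∧
    k₂ * S₄ - k₁ * S₈ - k₁₃ * S₆ * S₈ + (k₁₄ + k₁₅) * S₃ = 0 ∧
    k₅ * S₇ - k₆ * S₅ * S₉ + k₇ * S₁ = 0 := by
  have h45 : (0:ℝ) < k₄ + k₅ := by positivity
  have h78 : (0:ℝ) < k₇ + k₈ := by positivity
  have h1112 : (0:ℝ) < k₁₁ + k₁₂ := by positivity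
  have h1415 : (0:ℝ) < k₁₄ + k₁₅ := by positivity
  have hγpos : 0 < γ := by rw [hγ]; positivity
  have hβpos : 0 < β := by rw [hβ]; positivity
  have hαpos : 0 < α := by rw [hα]; positivity
  have hP : 0 < γ * S₄ + k₁₆ := by positivity
  have hQ : 0 < α * S₄ + k₁₆ := by positivity
  -- positivity of the concentrations
  have hS₇ : 0 < S₇ := by rw [hS₇def]; positivity
  have hS₈ : 0 < S₈ := by rw [hS₈def]; positivity
  have hS₆ : 0 < S₆ := by
    rw [hS₆def]; exact div_pos (by positivity) (mul_pos h45 hP)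
  have hS₂ : 0 < S₂ := by rw [hS₂def]; positivity
  have hS₃ : 0 < S₃ := by rw [hS₃def]; positivity
  have hS₅ : 0 < S₅ := by
    rw [hS₅def]
    exact div_pos (by positivity)
      (by have := mul_pos (mul_pos (mul_pos (mul_pos hk₆ hk₈) h45) hP) hS₉
          linarith [this])
  have hS₁ : 0 < S₁ := by rw [hS₁def]; positivity
  -- cleared-denominator identities
  have hK1 : (k₇ + k₈) * S₁ = k₆ * S₅ * S₉ + k₉ * S₄ * S₆ := by
    rw [hS₁def]; field_simp
  have hK2 : (k₁₁ + k₁₂) * S₂ = k₁₀ * S₇ * S₆ := by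
    rw [hS₂def]; field_simp
  have hK3 : (k₁₄ + k₁₅) * S₃ = k₁₃ * S₈ * S₆ := by
    rw [hS₃def]; field_simp
  have hK7 : (k₄ + k₅) * S₇ = k₃ * S₄ := by
    rw [hS₇def]; field_simp
  have hK8 : k₁ * S₈ = k₂ * S₄ := by
    rw [hS₈def]; field_simp
  have hK6 : (k₄ + k₅) * (γ * S₄ + k₁₆) * S₆ = k₃ * k₅ * S₄ := by
    rw [hS₆def]; field_simp
  have hKβ : (k₇ + k₈) * β = k₇ * k₉ := by
    rw [hβ]; field_simp
  have hKγ : k₁ * (k₄ + k₅) * (k₁₁ + k₁₂) * (k₁₄ + k₁₅) * γ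
      = k₁₀ * k₁₂ * k₃ * k₁ * (k₁₄ + k₁₅)
        + k₁₃ * k₁₅ * k₂ * (k₄ + k₅) * (k₁₁ + k₁₂) := by
    rw [hγ]; field_simp
  have hE : k₈ * (k₆ * (S₅ * S₉)) = (k₇ + k₈) * ((α * S₄ + k₁₆) * S₆) := by
    rw [hS₅def, hS₆def]
    field_simp
  refine ⟨⟨hS₁, hS₂, hS₃, hS₅, hS₆, hS₇, hS₈⟩, ?_, ?_, ?_, ?_, ?_, ?_, ?_, ?_, ?_⟩
  · linear_combination -hK1
  · linear_combination -hK2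
  · linear_combination -hK3
  · refine aux_cancel (c := (k₄ + k₅) * (k₇ + k₈)) (by positivity) ?_
    linear_combination (k₄ + k₅) * k₈ * hK1 + (k₄ + k₅) * hE
      + (k₄ + k₅) * S₄ * S₆ * hKβ + (k₄ + k₅) * (k₇ + k₈) * S₄ * S₆ * hα
      + (k₇ + k₈) * hK6 + (k₄ + k₅) * (k₇ + k₈) * hK8 + (k₇ + k₈) * k₄ * hK7
  · refine aux_cancel
      (c := (k₇ + k₈) * (k₁ * (k₄ + k₅) * (k₁₁ + k₁₂) * (k₁₄ + k₁₅)))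
      (by positivity) ?_
    linear_combination
      k₁ * (k₄ + k₅) * (k₁₁ + k₁₂) * (k₁₄ + k₁₅) * k₇ * hK1
      - k₁ * (k₄ + k₅) * (k₁₁ + k₁₂) * (k₁₄ + k₁₅) * hE
      - k₁ * (k₄ + k₅) * (k₁₁ + k₁₂) * (k₁₄ + k₁₅) * S₄ * S₆ * hKβ
      - k₁ * (k₄ + k₅) * (k₁₁ + k₁₂) * (k₁₄ + k₁₅) * (k₇ + k₈) * S₄ * S₆ * hα
      - (k₇ + k₈) * S₄ * S₆ * hKγ
      + (k₇ + k₈) * k₁ * (k₄ + k₅) * (k₁₄ + k₁₅) * k₁₂ * hK2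
      + (k₇ + k₈) * k₁ * (k₁₄ + k₁₅) * k₁₂ * k₁₀ * S₆ * hK7
      + (k₇ + k₈) * (k₄ + k₅) * (k₁₁ + k₁₂) * k₁₅ * k₁ * hK3
      + (k₇ + k₈) * (k₄ + k₅) * (k₁₁ + k₁₂) * k₁₅ * k₁₃ * S₆ * hK8
  · refine aux_cancel
      (c := (k₇ + k₈) * (k₁ * (k₄ + k₅) * (k₁₁ + k₁₂) * (k₁₄ + k₁₅)))
      (by positivity) ?_
    linear_combination
      k₁ * (k₄ + k₅) * (k₁₁ + k₁₂) * (k₁₄ + k₁₅) * k₈ * hK1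
      + k₁ * (k₄ + k₅) * (k₁₁ + k₁₂) * (k₁₄ + k₁₅) * hE
      + k₁ * (k₄ + k₅) * (k₁₁ + k₁₂) * (k₁₄ + k₁₅) * S₄ * S₆ * hKβ
      + k₁ * (k₄ + k₅) * (k₁₁ + k₁₂) * (k₁₄ + k₁₅) * (k₇ + k₈) * S₄ * S₆ * hα
      + (k₇ + k₈) * S₄ * S₆ * hKγ
      + ((k₇ + k₈) * (k₁ * (k₄ + k₅) * (k₁₁ + k₁₂) * (k₁₄ + k₁₅))
          - (k₇ + k₈) * k₁ * (k₄ + k₅) * (k₁₄ + k₁₅) * k₁₂) * hK2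
      - (k₇ + k₈) * k₁ * (k₁₄ + k₁₅) * k₁₂ * k₁₀ * S₆ * hK7
      + ((k₇ + k₈) * (k₁ * (k₄ + k₅) * (k₁₁ + k₁₂) * (k₁₄ + k₁₅))
          - (k₇ + k₈) * (k₄ + k₅) * (k₁₁ + k₁₂) * k₁₅ * k₁) * hK3
      - (k₇ + k₈) * (k₄ + k₅) * (k₁₁ + k₁₂) * k₁₅ * k₁₃ * S₆ * hK8
  · linear_combination hK2 - hK7
  · linear_combination hK3 - hK8
  · refine aux_cancel (c := (k₄ + k₅) * (k₇ + k₈)) (by positivity) ?_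
    linear_combination (k₄ + k₅) * k₇ * hK1 - (k₄ + k₅) * hE
      - (k₄ + k₅) * S₄ * S₆ * hKβ - (k₄ + k₅) * (k₇ + k₈) * S₄ * S₆ * hα
      - (k₇ + k₈) * hK6 + (k₇ + k₈) * k₅ * hK7
end
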